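/- All eigenvalues of the adjacency matrix of the unitary Cayley graph X = (Z_n, S) are integers, i.e., the unitary Cayley graph is an integral graph. -/

import Mathlib

open Matrix Complex BigOperators

/-- Adjacency matrix of the unitary Cayley graph on `ZMod n`. -/
noncomputable def ucAdj (n : ℕ) : Matrix (ZMod n) (ZMod n) ℂ :=
  Matrix.of fun u v : ZMod n => if Nat.gcd ((u - v).val) n = 1 then 1 else 0

/-! The adjacency matrix is the circulant matrix of the indicator of the units of `ZMod n`, so the
discrete Fourier transform diagonalises it and its eigenvalues are the Ramanujan sums
`c_n(b) = ∑_{gcd(s, n) = 1} e(sb/n)`. Möbius inversion over the divisors of `gcd(s, n)` gives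
`c_n(b) = ∑_{d ∣ n} μ(d) ∑_{d ∣ s} e(sb/n)`, and each inner sum is a geometric sum of an
`(n/d)`-th root of unity, hence equal to `n/d` or `0`. -/

open Finset ZMod ArithmeticFunction
open scoped ArithmeticFunction.Moebius

section Moebius

variable {R : Type*} [CommRing R]

theorem sum_divisors_moebius_eq_ite (k : ℕ) :
    ∑ d ∈ k.divisors, (μ d : R) = if k = 1 then 1 else 0 := by
  have h := congrArg (· k) (coe_moebius_mul_coe_zeta (R := R))
  simp only [coe_mul_zeta_apply, ArithmeticFunction.one_apply] at h
  simpa using h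

theorem ite_coprime_eq_sum_moebius {n : ℕ} (hn : n ≠ 0) (k : ℕ) :
    (if k.Coprime n then 1 else 0 : R) = ∑ d ∈ n.divisors with d ∣ k, (μ d : R) := by
  have hdvd : ∀ d ∈ n.divisors, d ∣ k ↔ d ∣ k.gcd n := fun d hd =>
    by simp [Nat.dvd_gcd_iff, Nat.dvd_of_mem_divisors hd]
  rw [filter_congr hdvd, Nat.divisors_filter_dvd_of_dvd hn (Nat.gcd_dvd_right k n),
    sum_divisors_moebius_eq_ite]

theorem sum_filter_coprime_eq_sum_moebius {α : Type*} (s : Finset α) (g : α → ℕ) (f : α → R)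
    {n : ℕ} (hn : n ≠ 0) :
    ∑ x ∈ s with (g x).Coprime n, f x =
      ∑ d ∈ n.divisors, (μ d : R) * ∑ x ∈ s with d ∣ g x, f x := by
  calc ∑ x ∈ s with (g x).Coprime n, f x
      = ∑ x ∈ s, (if (g x).Coprime n then 1 else 0 : R) * f x := by
        rw [sum_filter]; simp_rw [ite_mul, one_mul, zero_mul]
    _ = ∑ x ∈ s, ∑ d ∈ n.divisors, if d ∣ g x then (μ d : R) * f x else 0 := by
        simp_rw [ite_coprime_eq_sum_moebius hn, sum_filter, sum_mul, ite_mul, zero_mul]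
    _ = ∑ d ∈ n.divisors, (μ d : R) * ∑ x ∈ s with d ∣ g x, f x := by
        rw [sum_comm]; simp_rw [mul_sum, sum_filter]

end Moebius

theorem geom_sum_eq_ite_of_pow_eq_one {K : Type*} [Field K] [DecidableEq K] {z : K} {m : ℕ}
    (hz : z ^ m = 1) :
    ∑ i ∈ range m, z ^ i = if z = 1 then (m : K) else 0 := by
  split_ifs with h
  · simp [h]
  · rw [geom_sum_eq h, hz, sub_self, zero_div]

theorem sum_filter_dvd_val_eq_sum_range {M : Type*} [AddCommMonoid M] {n d : ℕ} [NeZero n]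
    (hd : d ∣ n) (f : ZMod n → M) :
    ∑ s : ZMod n with d ∣ s.val, f s = ∑ j ∈ range (n / d), f (d * j) := by
  have hd0 : 0 < d := Nat.pos_of_dvd_of_pos hd (NeZero.pos n)
  have val_mul : ∀ j ∈ range (n / d), ((d : ZMod n) * j).val = d * j := fun j hj => by
    rw [← Nat.cast_mul, ZMod.val_cast_of_lt]
    exact (Nat.lt_div_iff_mul_lt' hd j).mp (mem_range.mp hj)
  symm
  refine sum_nbij' (fun j => (d : ZMod n) * j) (fun s => s.val / d) ?_ ?_ ?_ ?_ fun _ _ => rfl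
  · intro j hj
    simp [val_mul j hj]
  · intro s _
    simpa using Nat.div_lt_div_of_lt_of_dvd hd s.val_lt
  · intro j hj
    simp [val_mul j hj, hd0]
  · intro s hs
    simp only [mem_filter, mem_univ, true_and] at hs
    simp [← Nat.cast_mul, Nat.mul_div_cancel' hs]

noncomputable def ramanujanSum (n : ℕ) [NeZero n] (b : ZMod n) : ℂ :=
  ∑ s : ZMod n with s.val.Coprime n, stdAddChar (s * b)

theorem ramanujanSum_eq_sum_divisors (n : ℕ) [NeZero n] (b : ZMod n) :
    ramanujanSum n b =
      ∑ d ∈ n.divisors,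
        (μ d : ℂ) * if stdAddChar ((d : ZMod n) * b) = 1 then ((n / d : ℕ) : ℂ) else 0 := by
  rw [ramanujanSum, sum_filter_coprime_eq_sum_moebius _ _ _ (NeZero.ne n)]
  refine sum_congr rfl fun d hd => ?_
  have hdn := Nat.dvd_of_mem_divisors hd
  have hpow : ∀ j : ℕ, stdAddChar ((d * j : ZMod n) * b) = stdAddChar ((d : ZMod n) * b) ^ j :=
    fun j => by rw [← AddChar.map_nsmul_eq_pow, nsmul_eq_mul]; ring_nf
  have hroot : stdAddChar ((d : ZMod n) * b) ^ (n / d) = 1 := by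
    rw [← hpow, ← Nat.cast_mul, Nat.mul_div_cancel' hdn, ZMod.natCast_self, zero_mul,
      AddChar.map_zero_eq_one]
  simp_rw [sum_filter_dvd_val_eq_sum_range hdn, hpow, geom_sum_eq_ite_of_pow_eq_one hroot]

theorem exists_int_ramanujanSum_eq (n : ℕ) [NeZero n] (b : ZMod n) :
    ∃ m : ℤ, ramanujanSum n b = m :=
  ⟨∑ d ∈ n.divisors, μ d * if stdAddChar ((d : ZMod n) * b) = 1 then ((n / d : ℕ) : ℤ) else 0,
    by
      rw [ramanujanSum_eq_sum_divisors]
      simp only [Int.cast_sum, Int.cast_mul, apply_ite (Int.cast : ℤ → ℂ), Int.cast_natCast,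
        Int.cast_zero]⟩

section Circulant

variable {N : ℕ} [NeZero N]

theorem dft_circulant_mulVec (v w : ZMod N → ℂ) (k : ZMod N) :
    𝓕 (circulant v *ᵥ w) k = 𝓕 v k * 𝓕 w k := by
  simp only [dft_apply, mulVec, dotProduct, circulant_apply, smul_eq_mul, mul_sum, sum_mul]
  rw [sum_comm]
  refine sum_congr rfl fun j _ => Fintype.sum_equiv (Equiv.subRight j) _ _ fun i => ?_
  have hchar : stdAddChar (-(i * k)) = stdAddChar (-((i - j) * k)) * stdAddChar (-(j * k)) := by
    rw [← AddChar.map_add_eq_mul]; ring_nf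
  rw [Equiv.subRight_apply, hchar]
  ring

theorem exists_eq_dft_of_circulant_mulVec_eq_smul {v w : ZMod N → ℂ} {lam : ℂ} (hw : w ≠ 0)
    (h : circulant v *ᵥ w = lam • w) : ∃ k, lam = 𝓕 v k := by
  obtain ⟨k, hk⟩ := Function.ne_iff.mp (dft.map_ne_zero_iff.mpr hw)
  refine ⟨k, mul_right_cancel₀ hk ?_⟩
  rw [← dft_circulant_mulVec, h, LinearEquiv.map_smul, Pi.smul_apply, smul_eq_mul]

end Circulant

theorem ucAdj_eq_circulant (n : ℕ) :
    ucAdj n = circulant fun s : ZMod n => if Nat.gcd s.val n = 1 then (1 : ℂ) else 0 :=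
  rfl

theorem dft_ite_coprime_eq_ramanujanSum (n : ℕ) [NeZero n] (k : ZMod n) :
    𝓕 (fun s : ZMod n => if Nat.gcd s.val n = 1 then (1 : ℂ) else 0) k = ramanujanSum n (-k) := by
  rw [dft_apply, ramanujanSum, sum_filter]
  refine sum_congr rfl fun s _ => ?_
  rw [smul_ite, smul_eq_mul, mul_one, smul_zero, mul_neg]

/-- The unitary Cayley graph is integral: every eigenvalue of its adjacency
matrix is an integer. -/
theorem uc_integral (n : ℕ) [NeZero n] (lam : ℂ)
    (h : ∃ w : ZMod n → ℂ, w ≠ 0 ∧ (ucAdj n) *ᵥ w = lam • w) :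
    ∃ m : ℤ, lam = (m : ℂ) := by
  obtain ⟨w, hw, hlam⟩ := h
  rw [ucAdj_eq_circulant] at hlam
  obtain ⟨k, rfl⟩ := exists_eq_dft_of_circulant_mulVec_eq_smul hw hlam
  rw [dft_ite_coprime_eq_ramanujanSum]
  exact exists_int_ramanujanSum_eq n (-k)
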